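/- arXiv:2006.01510 — 7 statements merged into one kernel-verified Lean document; each statement's English description precedes it below -/
import Mathlib

section
/- For real symmetric matrices A and B, the spectral norm (operator 2-norm) of AB + BA is at most the spectral norm of A^2 + B^2. -/
/-!
Since `A ± B` are symmetric, `(A ± B)² = A² + B² ± (AB + BA)` are positive semidefinite, i.e.
`-(A² + B²) ≤ AB + BA ≤ A² + B²` in the Loewner order. Hence `|⟪(AB + BA) x, x⟫| ≤
⟪(A² + B²) x, x⟫ ≤ ‖A² + B²‖ ‖x‖²`, and for a symmetric operator the norm is the supremum of the
absolute Rayleigh quotient.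
-/

open scoped Matrix.Norms.L2Operator

lemma Matrix.IsSymm.isSelfAdjoint {n α : Type*} [InvolutiveStar α] [TrivialStar α]
    {M : Matrix n n α} (hM : M.IsSymm) : IsSelfAdjoint M := by
  rwa [IsSelfAdjoint, star_eq_conjTranspose, conjTranspose_eq_transpose_of_trivial]

namespace ContinuousLinearMap

variable {𝕜 E : Type*} [RCLike 𝕜] [NormedAddCommGroup E] [InnerProductSpace 𝕜 E]

lemma rayleighQuotient_le_of_le {S T : E →L[𝕜] E} (h : T ≤ S) (x : E) :
    T.rayleighQuotient x ≤ S.rayleighQuotient x := by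
  have hdiff : 0 ≤ (S - T).rayleighQuotient x := div_nonneg (h.2 x) (sq_nonneg ‖x‖)
  rw [sub_eq_add_neg, rayleighQuotient_add, rayleighQuotient_neg_apply] at hdiff
  linarith

lemma isSymmetric_of_neg_le_of_le {S T : E →L[𝕜] E} (h₁ : -S ≤ T) (h₂ : T ≤ S) :
    T.IsSymmetric := by
  intro x y
  have hsum := h₁.isSymmetric x y
  have hdiff := h₂.isSymmetric x y
  simp only [coe_coe, sub_neg_eq_add, add_apply, sub_apply, inner_add_left, inner_add_right,
    inner_sub_left, inner_sub_right] at hsum hdiff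
  linear_combination (hsum - hdiff) / 2

lemma norm_le_norm_of_neg_le_of_le {S T : E →L[𝕜] E} (h₁ : -S ≤ T) (h₂ : T ≤ S) :
    ‖T‖ ≤ ‖S‖ := by
  rw [T.norm_eq_iSup_rayleighQuotient (isSymmetric_of_neg_le_of_le h₁ h₂)]
  refine ciSup_le fun x => ?_
  calc |T.rayleighQuotient x| ≤ S.rayleighQuotient x := abs_le.2
        ⟨by simpa using rayleighQuotient_le_of_le h₁ x, rayleighQuotient_le_of_le h₂ x⟩
    _ ≤ ‖S‖ := (le_abs_self _).trans (S.rayleighQuotient_le_norm x)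

variable [CompleteSpace E]

lemma isPositive_sq_of_isSelfAdjoint {P : E →L[𝕜] E} (hP : IsSelfAdjoint P) :
    (P ^ 2).IsPositive := by
  have h := isPositive_adjoint_comp_self P
  rwa [hP.adjoint_eq, ← mul_def, ← sq] at h

lemma norm_mul_add_mul_le_norm_sq_add_sq {S T : E →L[𝕜] E} (hS : IsSelfAdjoint S)
    (hT : IsSelfAdjoint T) : ‖S * T + T * S‖ ≤ ‖S ^ 2 + T ^ 2‖ := by
  refine norm_le_norm_of_neg_le_of_le ?_ ?_
  · rw [le_def]
    convert isPositive_sq_of_isSelfAdjoint (hS.add hT) using 1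
    noncomm_ring
  · rw [le_def]
    convert isPositive_sq_of_isSelfAdjoint (hS.sub hT) using 1
    noncomm_ring

end ContinuousLinearMap

theorem stmt1 {d : ℕ} (A B : Matrix (Fin d) (Fin d) ℝ)
    (hA : A.IsSymm) (hB : B.IsSymm) :
    ‖A * B + B * A‖ ≤ ‖A ^ 2 + B ^ 2‖ := by
  simp only [Matrix.cstar_norm_def, map_add, map_mul, map_pow]
  exact ContinuousLinearMap.norm_mul_add_mul_le_norm_sq_add_sq
    (hA.isSelfAdjoint.map _) (hB.isSelfAdjoint.map _)
end

section
/- For nonnegative real numbers a_1, …, a_n and m ≤ n, one has (1/n^m)(a_1 + ⋯ + a_n)^m ≥ ((n-m)!/n!) · Σ a_{j_1} ⋯ a_{j_m}, where the sum runs over all m-tuples of distinct indices j_1, …, j_m in {1,…,n}. -/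
open Finset Function

namespace Stmt3Aux

variable {n : ℕ}

/-- Sum over injective `m`-tuples with values in `s` of the product of `a`. -/
noncomputable def S (a : Fin n → ℝ) : ℕ → Finset (Fin n) → ℝ
  | 0, _ => 1
  | (m+1), s => ∑ j ∈ s, a j * S a m (s.erase j)

variable (a : Fin n → ℝ)

lemma S_zero (s : Finset (Fin n)) : S a 0 s = 1 := rfl

lemma S_succ (m : ℕ) (s : Finset (Fin n)) :
    S a (m+1) s = ∑ j ∈ s, a j * S a m (s.erase j) := rfl

lemma S_nonneg (ha : ∀ i, 0 ≤ a i) : ∀ m s, 0 ≤ S a m s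
  | 0, _ => zero_le_one
  | (m+1), s => Finset.sum_nonneg fun j _ => mul_nonneg (ha j) (S_nonneg ha m _)

lemma S_insert : ∀ (m : ℕ) (t : Finset (Fin n)) (x : Fin n), x ∉ t →
    S a (m+1) (insert x t) = S a (m+1) t + (m+1) * a x * S a m t := by
  intro m
  induction m with
  | zero =>
    intro t x hx
    simp [S_succ, S_zero, Finset.sum_insert hx]
    ring
  | succ m ih =>
    intro t x hx
    rw [S_succ, Finset.sum_insert hx, Finset.erase_insert hx]
    have hstep : ∀ j ∈ t, a j * S a (m+1) ((insert x t).erase j)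
        = a j * S a (m+1) (t.erase j) + (m+1) * a x * (a j * S a m (t.erase j)) := by
      intro j hj
      have hjx : x ≠ j := fun h => hx (h ▸ hj)
      rw [Finset.erase_insert_of_ne hjx, ih (t.erase j) x (fun h => hx (Finset.mem_of_mem_erase h))]
      ring
    rw [Finset.sum_congr rfl hstep, Finset.sum_add_distrib, ← Finset.mul_sum, ← S_succ, ← S_succ]
    push_cast
    ring

lemma sum_erase_comm (t : Finset (Fin n)) (f : Fin n → Fin n → ℝ) :
    ∑ k ∈ t, ∑ j ∈ t.erase k, f k j = ∑ j ∈ t, ∑ k ∈ t.erase j, f k j := by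
  have h1 : ∀ k ∈ t, ∑ j ∈ t.erase k, f k j = (∑ j ∈ t, f k j) - f k k := fun k hk =>
    Finset.sum_erase_eq_sub hk
  have h2 : ∀ j ∈ t, ∑ k ∈ t.erase j, f k j = (∑ k ∈ t, f k j) - f j j := fun j hj =>
    Finset.sum_erase_eq_sub hj
  rw [Finset.sum_congr rfl h1, Finset.sum_congr rfl h2, Finset.sum_sub_distrib,
    Finset.sum_sub_distrib, Finset.sum_comm]

lemma S_erase_sum : ∀ (m : ℕ) (t : Finset (Fin n)),
    ∑ k ∈ t, S a m (t.erase k) = ((t.card - m : ℕ) : ℝ) * S a m t := by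
  intro m
  induction m with
  | zero => intro t; simp [S_zero]
  | succ m ih =>
    intro t
    have key : ∑ k ∈ t, S a (m+1) (t.erase k)
        = ∑ j ∈ t, ∑ k ∈ t.erase j, a j * S a m ((t.erase k).erase j) := by
      rw [← sum_erase_comm t (fun k j => a j * S a m ((t.erase k).erase j))]
      exact Finset.sum_congr rfl fun k _ => S_succ a m (t.erase k)
    rw [key]
    have hinner : ∀ j ∈ t, ∑ k ∈ t.erase j, a j * S a m ((t.erase k).erase j)
        = a j * (((t.card - 1 - m : ℕ) : ℝ) * S a m (t.erase j)) := by
      intro j hj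
      rw [← Finset.mul_sum]
      congr 1
      have : ∀ k ∈ t.erase j, S a m ((t.erase k).erase j) = S a m ((t.erase j).erase k) := by
        intro k _; rw [Finset.erase_right_comm]
      rw [Finset.sum_congr rfl this, ih (t.erase j), Finset.card_erase_of_mem hj]
    rw [Finset.sum_congr rfl hinner]
    have hpull : ∑ x ∈ t, a x * (((t.card - 1 - m : ℕ):ℝ) * S a m (t.erase x))
        = ((t.card - 1 - m : ℕ):ℝ) * ∑ x ∈ t, a x * S a m (t.erase x) := by
      rw [Finset.mul_sum]
      exact Finset.sum_congr rfl fun x _ => by ring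
    have hnat : t.card - 1 - m = t.card - (m + 1) := by omega
    rw [hpull, ← S_succ, hnat]

lemma lemmaA (ha : ∀ i, 0 ≤ a i) (m : ℕ) (s : Finset (Fin n)) :
    S a (m+2) s ≤ ((s.card - (m+1) : ℕ) : ℝ) * ∑ j ∈ s, (a j)^2 * S a m (s.erase j) := by
  have expand : S a (m+2) s
      = ∑ j ∈ s, ∑ k ∈ s.erase j, (a j * a k) * S a m ((s.erase j).erase k) := by
    rw [S_succ]
    refine Finset.sum_congr rfl fun j _ => ?_
    rw [S_succ, Finset.mul_sum]
    exact Finset.sum_congr rfl fun k _ => by ring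
  rw [expand]
  have step1 : ∑ j ∈ s, ∑ k ∈ s.erase j, (a j * a k) * S a m ((s.erase j).erase k)
      ≤ ∑ j ∈ s, ∑ k ∈ s.erase j, (((a j)^2 + (a k)^2)/2) * S a m ((s.erase j).erase k) := by
    refine Finset.sum_le_sum fun j _ => Finset.sum_le_sum fun k _ => ?_
    have hS := S_nonneg a ha m ((s.erase j).erase k)
    nlinarith [sq_nonneg (a j - a k)]
  refine step1.trans ?_
  have split : ∑ j ∈ s, ∑ k ∈ s.erase j, (((a j)^2 + (a k)^2)/2) * S a m ((s.erase j).erase k)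
      = ∑ j ∈ s, ∑ k ∈ s.erase j, (a j)^2 * S a m ((s.erase j).erase k) := by
    have swap : ∑ j ∈ s, ∑ k ∈ s.erase j, (a k)^2 * S a m ((s.erase j).erase k)
        = ∑ j ∈ s, ∑ k ∈ s.erase j, (a j)^2 * S a m ((s.erase j).erase k) := by
      rw [sum_erase_comm s (fun j k => (a k)^2 * S a m ((s.erase j).erase k))]
      refine Finset.sum_congr rfl fun j _ => Finset.sum_congr rfl fun k _ => ?_
      rw [Finset.erase_right_comm]
    have : ∀ j ∈ s, ∀ k ∈ s.erase j,
        (((a j)^2 + (a k)^2)/2) * S a m ((s.erase j).erase k)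
        = ((a j)^2 * S a m ((s.erase j).erase k))/2
          + ((a k)^2 * S a m ((s.erase j).erase k))/2 := by
      intro j _ k _; ring
    calc ∑ j ∈ s, ∑ k ∈ s.erase j, (((a j)^2 + (a k)^2)/2) * S a m ((s.erase j).erase k)
        = ∑ j ∈ s, ∑ k ∈ s.erase j, (((a j)^2 * S a m ((s.erase j).erase k))/2
            + ((a k)^2 * S a m ((s.erase j).erase k))/2) := by
          exact Finset.sum_congr rfl fun j hj => Finset.sum_congr rfl fun k hk => this j hj k hk
      _ = (∑ j ∈ s, ∑ k ∈ s.erase j, (a j)^2 * S a m ((s.erase j).erase k))/2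
          + (∑ j ∈ s, ∑ k ∈ s.erase j, (a k)^2 * S a m ((s.erase j).erase k))/2 := by
          simp_rw [Finset.sum_add_distrib, ← Finset.sum_div]
      _ = ∑ j ∈ s, ∑ k ∈ s.erase j, (a j)^2 * S a m ((s.erase j).erase k) := by
          rw [swap]; ring
  rw [split, Finset.mul_sum]
  refine le_of_eq (Finset.sum_congr rfl fun j hj => ?_)
  rw [← Finset.mul_sum, S_erase_sum, Finset.card_erase_of_mem hj]
  have : (s.card - 1 - m : ℕ) = (s.card - (m+1) : ℕ) := by omega
  rw [this]; ring

lemma lemmaB (ha : ∀ i, 0 ≤ a i) (m : ℕ) (s : Finset (Fin n)) (hms : m ≤ s.card) :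
    (s.card : ℝ) * S a (m+1) s ≤ ((s.card - m : ℕ) : ℝ) * (∑ j ∈ s, a j) * S a m s := by
  match m with
  | 0 =>
    simp [S_zero, S_succ]
  | (M+1) =>
    set c := s.card with hc
    have hid : (∑ j ∈ s, a j) * S a (M+1) s
        = S a (M+2) s + (M+1) * ∑ j ∈ s, (a j)^2 * S a M (s.erase j) := by
      rw [Finset.sum_mul]
      have : ∀ j ∈ s, a j * S a (M+1) s
          = a j * S a (M+1) (s.erase j) + (M+1) * ((a j)^2 * S a M (s.erase j)) := by
        intro j hj
        have h1 : S a (M+1) s = S a (M+1) (s.erase j) + (M+1) * a j * S a M (s.erase j) := by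
          conv_lhs => rw [← Finset.insert_erase hj]
          exact S_insert a M (s.erase j) j (Finset.notMem_erase j s)
        rw [h1]; ring
      rw [Finset.sum_congr rfl this, Finset.sum_add_distrib, ← S_succ, ← Finset.mul_sum]
    have hA := lemmaA a ha M s
    have hR : 0 ≤ ∑ j ∈ s, (a j)^2 * S a M (s.erase j) :=
      Finset.sum_nonneg fun j _ => mul_nonneg (sq_nonneg _) (S_nonneg a ha M _)
    have hcast : ((c - (M+1) : ℕ) : ℝ) = (c : ℝ) - (M+1) := by
      push_cast [Nat.cast_sub hms]; ring
    rw [hcast]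
    rw [← hc, hcast] at hA
    have hM1 : (0:ℝ) ≤ (M:ℝ) + 1 := by positivity
    have h2 : ((c:ℝ)-(M+1)) * ((∑ j ∈ s, a j) * S a (M+1) s)
        = ((c:ℝ)-(M+1)) * (S a (M+2) s + (M+1) * ∑ j ∈ s, (a j)^2 * S a M (s.erase j)) := by
      rw [hid]
    have h3 := mul_le_mul_of_nonneg_left hA hM1
    nlinarith [h2, h3]

lemma lemmaC (ha : ∀ i, 0 ≤ a i) :
    ∀ m : ℕ, m ≤ n → (n : ℝ)^m * S a m (univ : Finset (Fin n))
      ≤ (n.descFactorial m : ℝ) * (∑ i, a i)^m := by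
  intro m
  induction m with
  | zero => intro _; simp [S_zero]
  | succ m ih =>
    intro hmn
    have hm : m ≤ n := Nat.le_of_succ_le hmn
    have hcard : (univ : Finset (Fin n)).card = n := by simp
    have hB := lemmaB a ha m (univ : Finset (Fin n)) (by rw [hcard]; exact hm)
    rw [hcard] at hB
    have hT : 0 ≤ ∑ i, a i := Finset.sum_nonneg fun i _ => ha i
    have hpow : (0:ℝ) ≤ (n:ℝ)^m := by positivity
    have h1 : (n:ℝ)^(m+1) * S a (m+1) univ ≤ (n:ℝ)^m * (((n - m : ℕ):ℝ) * (∑ i, a i) * S a m univ) := by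
      calc (n:ℝ)^(m+1) * S a (m+1) univ = (n:ℝ)^m * ((n:ℝ) * S a (m+1) univ) := by ring
        _ ≤ (n:ℝ)^m * (((n - m : ℕ):ℝ) * (∑ i, a i) * S a m univ) :=
            mul_le_mul_of_nonneg_left hB hpow
    refine h1.trans ?_
    have h2 : (n:ℝ)^m * (((n - m : ℕ):ℝ) * (∑ i, a i) * S a m univ)
        = ((n - m : ℕ):ℝ) * (∑ i, a i) * ((n:ℝ)^m * S a m univ) := by ring
    rw [h2]
    have hnm : (0:ℝ) ≤ ((n - m : ℕ):ℝ) * (∑ i, a i) := by positivity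
    calc ((n - m : ℕ):ℝ) * (∑ i, a i) * ((n:ℝ)^m * S a m univ)
        ≤ ((n - m : ℕ):ℝ) * (∑ i, a i) * ((n.descFactorial m : ℝ) * (∑ i, a i)^m) :=
          mul_le_mul_of_nonneg_left (ih hm) hnm
      _ = (n.descFactorial (m+1) : ℝ) * (∑ i, a i)^(m+1) := by
          rw [Nat.descFactorial_succ]; push_cast; ring

open Classical in
lemma lemmaD : ∀ (m : ℕ) (s : Finset (Fin n)),
    S a m s = ∑ f ∈ Finset.univ.filter
      (fun f : Fin m → Fin n => Function.Injective f ∧ ∀ i, f i ∈ s), ∏ i, a (f i) := by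
  intro m
  induction m with
  | zero =>
    intro s
    have hall : ∀ f : Fin 0 → Fin n, Function.Injective f ∧ ∀ i, f i ∈ s :=
      fun f => ⟨fun i => i.elim0, fun i => i.elim0⟩
    rw [Finset.filter_true_of_mem (fun f _ => hall f)]
    simp [S_zero]
  | succ m ih =>
    intro s
    rw [Finset.sum_filter]
    have hbij : ∑ f : Fin (m+1) → Fin n,
          (if (Function.Injective f ∧ ∀ i, f i ∈ s) then ∏ i, a (f i) else 0)
        = ∑ p : Fin n × (Fin m → Fin n),
          (if (Function.Injective (Fin.cons p.1 p.2 : Fin (m+1) → Fin n) ∧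
              ∀ i, (Fin.cons p.1 p.2 : Fin (m+1) → Fin n) i ∈ s)
            then ∏ i, a ((Fin.cons p.1 p.2 : Fin (m+1) → Fin n) i) else 0) := by
      refine (Fintype.sum_equiv (Fin.consEquiv (fun _ : Fin (m+1) => Fin n)) _ _ fun p => ?_).symm
      rcases p with ⟨j, g⟩
      rfl
    rw [hbij, Fintype.sum_prod_type]
    have hterm : ∀ (j : Fin n) (g : Fin m → Fin n),
        (if (Function.Injective (Fin.cons j g : Fin (m+1) → Fin n) ∧
              ∀ i, (Fin.cons j g : Fin (m+1) → Fin n) i ∈ s)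
          then ∏ i, a ((Fin.cons j g : Fin (m+1) → Fin n) i) else 0)
        = if j ∈ s then
            (a j * if (Function.Injective g ∧ ∀ i, g i ∈ s.erase j) then ∏ i, a (g i) else 0)
          else 0 := by
      intro j g
      have hiff : (Function.Injective (Fin.cons j g : Fin (m+1) → Fin n) ∧
            ∀ i, (Fin.cons j g : Fin (m+1) → Fin n) i ∈ s)
          ↔ (j ∈ s ∧ (Function.Injective g ∧ ∀ i, g i ∈ s.erase j)) := by
        rw [Fin.cons_injective_iff, Fin.forall_fin_succ]
        simp only [Fin.cons_zero, Fin.cons_succ, Finset.mem_erase, Set.mem_range, not_exists]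
        constructor
        · rintro ⟨⟨hr, hg⟩, hj, hgs⟩
          exact ⟨hj, hg, fun i => ⟨fun h => hr i h, hgs i⟩⟩
        · rintro ⟨hj, hg, hgs⟩
          exact ⟨⟨fun i h => (hgs i).1 h, hg⟩, hj, fun i => (hgs i).2⟩
      have hprod : ∏ i, a ((Fin.cons j g : Fin (m+1) → Fin n) i) = a j * ∏ i, a (g i) := by
        rw [Fin.prod_univ_succ]
        simp
      rw [hprod]
      by_cases hj : j ∈ s
      · by_cases hg : Function.Injective g ∧ ∀ i, g i ∈ s.erase j
        · rw [if_pos (hiff.mpr ⟨hj, hg⟩), if_pos hj, if_pos hg]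
        · rw [if_neg (fun h => hg (hiff.mp h).2), if_pos hj, if_neg hg, mul_zero]
      · rw [if_neg (fun h => hj (hiff.mp h).1), if_neg hj]
    rw [Finset.sum_congr rfl (fun j _ => Finset.sum_congr rfl (fun g _ => hterm j g))]
    have hsum : ∀ j : Fin n,
        ∑ g : Fin m → Fin n, (if j ∈ s then
            (a j * if (Function.Injective g ∧ ∀ i, g i ∈ s.erase j) then ∏ i, a (g i) else 0)
          else 0)
        = if j ∈ s then a j * S a m (s.erase j) else 0 := by
      intro j
      by_cases hj : j ∈ s
      · simp only [if_pos hj, ← Finset.mul_sum]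
        congr 1
        rw [ih (s.erase j), Finset.sum_filter]
      · simp [hj]
    rw [Finset.sum_congr rfl (fun j _ => hsum j), S_succ]
    rw [← Finset.sum_filter]
    congr 1
    ext j
    simp

end Stmt3Aux

theorem stmt3 (n m : ℕ) (hm : 1 ≤ m) (hmn : m ≤ n)
    (a : Fin n → ℝ) (ha : ∀ i, 0 ≤ a i) :
    (1 / (n : ℝ) ^ m) * (∑ i, a i) ^ m ≥
      ((n - m).factorial : ℝ) / (n.factorial : ℝ) *
        ∑ f ∈ Finset.univ.filter (fun f : Fin m → Fin n => Function.Injective f),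
          ∏ i, a (f i) := by
  classical
  have hn : 0 < n := lt_of_lt_of_le hm hmn
  have hSd : Stmt3Aux.S a m (Finset.univ : Finset (Fin n))
      = ∑ f ∈ Finset.univ.filter (fun f : Fin m → Fin n => Function.Injective f),
          ∏ i, a (f i) := by
    rw [Stmt3Aux.lemmaD a m Finset.univ]
    congr 1
    apply Finset.filter_congr
    intro f _
    simp
  have hC := Stmt3Aux.lemmaC a ha m hmn
  rw [hSd] at hC
  have hfac : (n.factorial : ℝ) = ((n - m).factorial : ℝ) * (n.descFactorial m : ℝ) := by
    rw [← Nat.cast_mul, Nat.factorial_mul_descFactorial hmn]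
  have hdpos : (0:ℝ) < (n.descFactorial m : ℝ) := by
    have : 0 < n.descFactorial m := Nat.pos_of_ne_zero fun h =>
      absurd (Nat.descFactorial_eq_zero_iff_lt.mp h) (not_lt.mpr hmn)
    exact_mod_cast this
  have hfpos : (0:ℝ) < ((n - m).factorial : ℝ) := by
    exact_mod_cast Nat.factorial_pos (n - m)
  have hnpow : (0:ℝ) < (n:ℝ)^m := by positivity
  rw [ge_iff_le, hfac]
  have hcoef : ((n - m).factorial : ℝ) / (((n - m).factorial : ℝ) * (n.descFactorial m : ℝ))
      = 1 / (n.descFactorial m : ℝ) := by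
    rw [eq_div_iff (ne_of_gt hdpos)]
    field_simp
  rw [hcoef, div_mul_eq_mul_div, one_mul, ← one_div_mul_eq_div]
  rw [div_mul_eq_mul_div, one_mul, div_mul_eq_mul_div, one_mul,
    div_le_div_iff₀ hdpos hnpow]
  nlinarith [hC]
end

section
/- Let A_1, …, A_n be positive semidefinite real symmetric matrices with A_1 + ⋯ + A_n ⪯ n·I. Then Σ_{i≠j} A_i A_j ⪯ n(n-1)·I. -/
/-!
Write `S = ∑ i, A i`; the off-diagonal sum is `S² - ∑ i, A i²`. Expanding `∑ i, (n A i - S)² ⪰ 0`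
gives the Cauchy–Schwarz bound `S² ⪯ n ∑ i, A i²`, and `0 ⪯ S ⪯ n I` gives `S² ⪯ n² I` by
functional calculus. Hence `n (S² - ∑ i, A i²) ⪯ (n - 1) S² ⪯ n² (n - 1) I`.
-/

open Finset

theorem sum_filter_ne_mul_eq {R ι : Type*} [NonUnitalNonAssocRing R] [Fintype ι] [DecidableEq ι]
    (f : ι → R) :
    ∑ p ∈ univ.filter (fun p : ι × ι => p.1 ≠ p.2), f p.1 * f p.2 =
      (∑ i, f i) * (∑ i, f i) - ∑ i, f i * f i := by
  rw [eq_sub_iff_add_eq, sum_mul_sum, sum_filter, Fintype.sum_prod_type, ← sum_add_distrib]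
  refine sum_congr rfl fun i _ => ?_
  rw [← sum_filter, filter_ne, sum_erase_add _ _ (mem_univ i)]

section StarOrderedAlgebra

variable {A : Type*} [Ring A] [StarRing A] [PartialOrder A] [StarOrderedRing A] [Algebra ℝ A]

theorem pow_le_smul_one_of_le_smul_one [TopologicalSpace A]
    [ContinuousFunctionalCalculus ℝ A IsSelfAdjoint] [NonnegSpectrumClass ℝ A]
    {a : A} {c : ℝ} (ha : 0 ≤ a) (hac : a ≤ c • 1) (k : ℕ) :
    a ^ k ≤ c ^ k • 1 := by
  rw [← Algebra.algebraMap_eq_smul_one] at hac ⊢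
  rw [← cfc_pow_id (R := ℝ) a k]
  refine cfc_le_algebraMap _ _ a fun x hx => ?_
  exact pow_le_pow_left₀ (spectrum_nonneg_of_nonneg ha hx)
    ((le_algebraMap_iff_spectrum_le ha.isSelfAdjoint).mp hac x hx) k

variable [StarModule ℝ A]

theorem sum_mul_self_le_card_smul_sum {ι : Type*} [Fintype ι] {a : ι → A}
    (ha : ∀ i, IsSelfAdjoint (a i)) :
    (∑ i, a i) * (∑ i, a i) ≤ (Fintype.card ι : ℝ) • ∑ i, a i * a i := by
  set N : ℝ := (Fintype.card ι : ℝ)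
  set s := ∑ i, a i with hs_def
  have hs : IsSelfAdjoint s := isSelfAdjoint_sum _ fun i _ => ha i
  have hid : ∑ i, (N • a i - s) * (N • a i - s) = N • (N • ∑ i, a i * a i - s * s) := by
    simp only [sub_mul, mul_sub, smul_mul_assoc, mul_smul_comm,
      sum_sub_distrib, ← smul_sum, ← sum_mul, ← mul_sum, sum_const, card_univ]
    rw [← hs_def, ← Nat.cast_smul_eq_nsmul ℝ]
    module
  have hnonneg : 0 ≤ ∑ i, (N • a i - s) * (N • a i - s) :=
    sum_nonneg fun i _ => (((IsSelfAdjoint.all N).smul (ha i)).sub hs).mul_self_nonneg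
  rcases isEmpty_or_nonempty ι with hι | hι
  · simp [s]
  have hN : 0 < N := Nat.cast_pos.mpr Fintype.card_pos
  rwa [hid, smul_nonneg_iff_nonneg_of_pos_left hN, sub_nonneg] at hnonneg

theorem sum_filter_ne_mul_le [TopologicalSpace A]
    [ContinuousFunctionalCalculus ℝ A IsSelfAdjoint] [NonnegSpectrumClass ℝ A]
    {ι : Type*} [Fintype ι] [DecidableEq ι] {a : ι → A} (ha : ∀ i, 0 ≤ a i)
    (hsum : ∑ i, a i ≤ (Fintype.card ι : ℝ) • 1) :
    ∑ p ∈ univ.filter (fun p : ι × ι => p.1 ≠ p.2), a p.1 * a p.2 ≤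
      ((Fintype.card ι : ℝ) * ((Fintype.card ι : ℝ) - 1)) • 1 := by
  set N : ℝ := (Fintype.card ι : ℝ)
  set s := ∑ i, a i
  rcases isEmpty_or_nonempty ι with hι | hι
  · simp [N]
  have hN : 1 ≤ N := Nat.one_le_cast.mpr Fintype.card_pos
  have hcs : s * s ≤ N • ∑ i, a i * a i :=
    sum_mul_self_le_card_smul_sum fun i => (ha i).isSelfAdjoint
  have hsq : s * s ≤ N ^ 2 • 1 := by
    simpa only [sq] using pow_le_smul_one_of_le_smul_one (sum_nonneg fun i _ => ha i) hsum 2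
  rw [sum_filter_ne_mul_eq, ← smul_le_smul_iff_of_pos_left (by linarith : (0 : ℝ) < N)]
  calc N • (s * s - ∑ i, a i * a i) = (N - 1) • (s * s) + (s * s - N • ∑ i, a i * a i) := by
        module
    _ ≤ (N - 1) • (N ^ 2 • 1) + 0 :=
        add_le_add (smul_le_smul_of_nonneg_left hsq (by linarith)) (sub_nonpos.mpr hcs)
    _ = N • ((N * (N - 1)) • 1) := by module

end StarOrderedAlgebra

open scoped MatrixOrder in
theorem stmt5 {d n : ℕ} (A : Fin n → Matrix (Fin d) (Fin d) ℝ)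
    (hA : ∀ i, (A i).PosSemidef)
    (hsum : ((n : ℝ) • (1 : Matrix (Fin d) (Fin d) ℝ) - ∑ i, A i).PosSemidef) :
    (((n : ℝ) * ((n : ℝ) - 1)) • (1 : Matrix (Fin d) (Fin d) ℝ) -
      ∑ p ∈ Finset.univ.filter (fun p : Fin n × Fin n => p.1 ≠ p.2),
        A p.1 * A p.2).PosSemidef := by
  have h := sum_filter_ne_mul_le (fun i => (hA i).nonneg)
    (by rwa [Fintype.card_fin, Matrix.le_iff])
  rwa [Fintype.card_fin, Matrix.le_iff] at h
end

section
/- Let A_1, …, A_n (n ≥ 2) be positive semidefinite real symmetric matrices with A_1 + ⋯ + A_n ⪯ n·I. Then −(1/4)·n(n-1)·I ⪯ Σ_{i≠j} A_i A_j. -/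
/-!
For `i ≠ j` put `C = A i + A j` and `D = A i - A j`. Then `-C ≤ D ≤ C` and `C ≤ n`, and these
force `D² ≤ n C`: indeed `2n (n C - D²)` is the sum of the conjugates of `C + D`, `C - D` and
`2 (n - C)` by `n - D`, `n + D` and `D`. Summing over the ordered pairs `i ≠ j` gives
`n Q - S² ≤ n (n - 1) S`, where `S = ∑ A i` and `Q = ∑ A i²`. Finally
`∑_{i ≠ j} A i A j + n (n - 1) / 4 = ((n - 1) / n) (S - n / 2)² + (n (n - 1) S - (n Q - S²)) / n`
is a sum of nonnegative terms.
-/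

open Finset
open scoped MatrixOrder

namespace Finset

variable {ι : Type*} [Fintype ι] [DecidableEq ι]

theorem sum_univ_offDiag {M : Type*} [AddCommGroup M] (f : ι × ι → M) :
    ∑ p ∈ univ.offDiag, f p = ∑ i, ∑ j, f (i, j) - ∑ i, f (i, i) := by
  rw [eq_sub_iff_add_eq, ← sum_diag, add_comm, ← sum_union (disjoint_diag_offDiag _),
    diag_union_offDiag, univ_product_univ, Fintype.sum_prod_type]

theorem sum_univ_offDiag_add {M : Type*} [AddCommGroup M] [Module ℝ M] (A : ι → M) :
    ∑ p ∈ univ.offDiag, (A p.1 + A p.2) = (2 * (Fintype.card ι - 1 : ℝ)) • ∑ i, A i := by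
  simp only [sum_univ_offDiag, sum_add_distrib, sum_const, card_univ, ← smul_sum]
  module

theorem add_le_sum_univ {M : Type*} [AddCommMonoid M] [PartialOrder M] [IsOrderedAddMonoid M]
    {A : ι → M} (hA : ∀ i, 0 ≤ A i) {i j : ι} (hij : i ≠ j) : A i + A j ≤ ∑ k, A k := by
  rw [← sum_pair hij]
  exact sum_le_sum_of_subset_of_nonneg (subset_univ _) fun k _ _ => hA k

variable {R : Type*} [Ring R]

theorem sum_univ_offDiag_mul (A : ι → R) :
    ∑ p ∈ univ.offDiag, A p.1 * A p.2 = (∑ i, A i) * ∑ i, A i - ∑ i, A i * A i := by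
  rw [sum_univ_offDiag, sum_mul_sum]

theorem sum_univ_offDiag_sub_mul_self [Module ℝ R] (A : ι → R) :
    ∑ p ∈ univ.offDiag, (A p.1 - A p.2) * (A p.1 - A p.2) =
      (2 : ℝ) • ((Fintype.card ι : ℝ) • ∑ i, A i * A i - (∑ i, A i) * ∑ i, A i) := by
  have hcross : ∑ i, ∑ j, A j * A i = (∑ i, A i) * ∑ i, A i := by
    rw [sum_comm, sum_mul_sum]
  rw [sum_univ_offDiag]
  simp only [sub_self, mul_zero, sum_const_zero, sub_zero, mul_sub, sub_mul, sum_sub_distrib,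
    sum_const, card_univ, ← smul_sum, ← sum_mul_sum, hcross]
  module

end Finset

section StarOrderedAlgebra

variable {R : Type*} [Ring R] [StarRing R] [PartialOrder R] [StarOrderedRing R]
  [Algebra ℝ R] [StarModule ℝ R]

theorem mul_self_le_smul_of_neg_le_of_le {C D : R} {t : ℝ} (ht : 0 < t) (hD : IsSelfAdjoint D)
    (hCD : -C ≤ D) (hDC : D ≤ C) (hC : C ≤ t • 1) : D * D ≤ t • C := by
  have hT : IsSelfAdjoint (t • (1 : R)) := .smul (.all t) (.one R)
  have key : (2 * t) • (t • C - D * D) =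
      (t • 1 - D) * (C + D) * (t • 1 - D) + (t • 1 + D) * (C - D) * (t • 1 + D)
        + (2 : ℝ) • (D * (t • 1 - C) * D) := by
    simp only [mul_add, add_mul, mul_sub, sub_mul, smul_mul_assoc, mul_smul_comm, one_mul, mul_one]
    module
  have hsum : 0 ≤ (2 * t) • (t • C - D * D) := by
    rw [key]
    refine add_nonneg (add_nonneg ?_ ?_) (smul_nonneg zero_le_two ?_)
    · exact (hT.sub hD).conjugate_nonneg (neg_le_iff_add_nonneg'.mp hCD)
    · exact (hT.add hD).conjugate_nonneg (sub_nonneg.mpr hDC)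
    · exact hD.conjugate_nonneg (sub_nonneg.mpr hC)
  exact sub_nonneg.mp ((smul_nonneg_iff_nonneg_of_pos_left (by positivity)).mp hsum)

theorem neg_smul_one_le_mul_self_sub {S Q : R} {n : ℝ} (hn : 1 ≤ n) (hS : IsSelfAdjoint S)
    (hQ : n • Q - S * S ≤ (n * (n - 1)) • S) :
    (-(1 / 4 * n * (n - 1))) • 1 ≤ S * S - Q := by
  have hn₀ : 0 < n := by linarith
  have hsq : 0 ≤ (S - (n / 2) • 1) * (S - (n / 2) • 1) :=
    (hS.sub (.smul (.all _) (.one R))).mul_self_nonneg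
  have hsos : S * S - Q - (-(1 / 4 * n * (n - 1))) • 1 =
      ((n - 1) / n) • ((S - (n / 2) • 1) * (S - (n / 2) • 1))
        + (1 / n) • ((n * (n - 1)) • S - (n • Q - S * S)) := by
    simp only [mul_sub, sub_mul, smul_mul_assoc, mul_smul_comm, one_mul, mul_one]
    match_scalars <;> field_simp <;> ring
  rw [← sub_nonneg, hsos]
  exact add_nonneg (smul_nonneg (div_nonneg (by linarith) hn₀.le) hsq)
    (smul_nonneg (by positivity) (sub_nonneg.mpr hQ))

variable {ι : Type*} [Fintype ι] [DecidableEq ι]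

theorem neg_smul_one_le_sum_offDiag_mul (A : ι → R) (hA : ∀ i, 0 ≤ A i)
    (hS : ∑ i, A i ≤ (Fintype.card ι : ℝ) • 1) :
    (-(1 / 4 * (Fintype.card ι : ℝ) * ((Fintype.card ι : ℝ) - 1))) • 1 ≤
      ∑ p ∈ univ.offDiag, A p.1 * A p.2 := by
  cases isEmpty_or_nonempty ι
  · simp
  have hpair : ∀ p ∈ univ.offDiag, (A p.1 - A p.2) * (A p.1 - A p.2) ≤
      (Fintype.card ι : ℝ) • (A p.1 + A p.2) := fun p hp =>
    mul_self_le_smul_of_neg_le_of_le (by positivity)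
      ((hA p.1).isSelfAdjoint.sub (hA p.2).isSelfAdjoint)
      (by rw [neg_add']; exact sub_le_sub_right (neg_le_self (hA p.1)) _)
      (by rw [sub_eq_add_neg]; exact add_le_add_right (neg_le_self (hA p.2)) _)
      ((add_le_sum_univ hA (mem_offDiag.mp hp).2.2).trans hS)
  have hQ := sum_le_sum hpair
  rw [sum_univ_offDiag_sub_mul_self, ← smul_sum, sum_univ_offDiag_add, smul_smul,
    show (Fintype.card ι : ℝ) * (2 * (Fintype.card ι - 1)) =
      2 * ((Fintype.card ι : ℝ) * (Fintype.card ι - 1)) by ring, mul_smul,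
    smul_le_smul_iff_of_pos_left two_pos] at hQ
  rw [sum_univ_offDiag_mul]
  exact neg_smul_one_le_mul_self_sub (by exact_mod_cast Fintype.card_pos)
    (isSelfAdjoint_sum _ fun i _ => (hA i).isSelfAdjoint) hQ

end StarOrderedAlgebra

theorem stmt7_general {d n : ℕ} (A : Fin n → Matrix (Fin d) (Fin d) ℝ)
    (hA : ∀ i, (A i).PosSemidef)
    (hsum : ((n : ℝ) • (1 : Matrix (Fin d) (Fin d) ℝ) - ∑ i, A i).PosSemidef) :
    ((∑ p ∈ Finset.univ.filter (fun p : Fin n × Fin n => p.1 ≠ p.2), A p.1 * A p.2) -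
      (-(1 / 4 * (n : ℝ) * ((n : ℝ) - 1))) • (1 : Matrix (Fin d) (Fin d) ℝ)).PosSemidef := by
  have h := neg_smul_one_le_sum_offDiag_mul A (fun i => (hA i).nonneg)
    (by rwa [Fintype.card_fin, Matrix.le_iff])
  have hoffDiag : univ.filter (fun p : Fin n × Fin n => p.1 ≠ p.2) = univ.offDiag := by
    ext; simp
  rwa [Fintype.card_fin, Matrix.le_iff, ← hoffDiag] at h

theorem stmt7 {d n : ℕ} (hn : 2 ≤ n) (A : Fin n → Matrix (Fin d) (Fin d) ℝ)
    (hA : ∀ i, (A i).PosSemidef)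
    (hsum : ((n : ℝ) • (1 : Matrix (Fin d) (Fin d) ℝ) - ∑ i, A i).PosSemidef) :
    ((∑ p ∈ Finset.univ.filter (fun p : Fin n × Fin n => p.1 ≠ p.2), A p.1 * A p.2) -
      (-(1 / 4 * (n : ℝ) * ((n : ℝ) - 1))) • (1 : Matrix (Fin d) (Fin d) ℝ)).PosSemidef :=
  stmt7_general A hA hsum
end

section
/- Let B be a real symmetric matrix with 0 ⪯ B ⪯ n·I where n ≥ 3 is a real number. Then −B(B − nI)(B − I) ⪯ ((n-1)^2/4)·B. -/
/-!
Completing the square, `((n - 1)² / 4) x + x (x - n) (x - 1) = x (x - (n + 1) / 2)²`, and for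
symmetric `B` the right-hand side is the congruence `C B C` with `C = B - ((n + 1) / 2) I`
symmetric, hence positive semidefinite whenever `B` is.
-/

open Matrix

theorem sq_div_four_smul_add_mul_sub_smul_one_mul_sub_one {A : Type*} [Ring A] [Algebra ℝ A]
    (n : ℝ) (x : A) :
    ((n - 1) ^ 2 / 4) • x + x * (x - n • 1) * (x - 1) =
      (x - ((n + 1) / 2) • 1) * x * (x - ((n + 1) / 2) • 1) := by
  simp only [mul_sub, sub_mul, smul_mul_assoc, mul_smul_comm, one_mul, mul_one, smul_smul,
    smul_sub]
  module

theorem Matrix.PosSemidef.mul_mul_same_of_isHermitian {ι R : Type*} [Fintype ι] [Ring R]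
    [PartialOrder R] [StarRing R] {A C : Matrix ι ι R} (hA : A.PosSemidef) (hC : C.IsHermitian) :
    (C * A * C).PosSemidef := by
  simpa only [hC.eq] using hA.conjTranspose_mul_mul_same C

theorem stmt11_general {d : ℕ} (n : ℝ) (B : Matrix (Fin d) (Fin d) ℝ)
    (hB : B.PosSemidef) :
    (((n - 1) ^ 2 / 4) • B -
      (-(B * (B - n • (1 : Matrix (Fin d) (Fin d) ℝ)) *
        (B - (1 : Matrix (Fin d) (Fin d) ℝ))))).PosSemidef := by
  rw [sub_neg_eq_add, sq_div_four_smul_add_mul_sub_smul_one_mul_sub_one]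
  exact hB.mul_mul_same_of_isHermitian
    (hB.isHermitian.sub (isHermitian_one.smul (IsSelfAdjoint.all _)))

theorem stmt11 {d : ℕ} (n : ℝ) (hn : 3 ≤ n) (B : Matrix (Fin d) (Fin d) ℝ)
    (hB : B.PosSemidef)
    (hBn : (n • (1 : Matrix (Fin d) (Fin d) ℝ) - B).PosSemidef) :
    (((n - 1) ^ 2 / 4) • B -
      (-(B * (B - n • (1 : Matrix (Fin d) (Fin d) ℝ)) *
        (B - (1 : Matrix (Fin d) (Fin d) ℝ))))).PosSemidef :=
  stmt11_general n B hB
end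

section
/- Let n ≥ 3 and let A_1, …, A_n be positive semidefinite real symmetric matrices with A_1 + ⋯ + A_n ⪯ n·I. Then −(n/(4(n−2)))·I ⪯ 𝔼̃_{i,j,k} A_i A_j A_k, where 𝔼̃ denotes the average over ordered triples of pairwise distinct indices. -/
/-!
Write `S = ∑ i, A i ⪯ c` and `T` for the sum over distinct triples. Inclusion–exclusion gives
`T = ∑ j, ((S - A j) A j (S - A j) - A j (S - A j) A j)`, and completing squares then shows that for
every real `λ`
`T - 2λ S² + (c²/4 + cλ + 2λ²) S = ∑ j, ((S - A j - λ) A j (S - A j - λ)`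
`  + (A j - c/2 - λ) A j (A j - c/2 - λ) + A j (c - S) A j) ⪰ 0`.
Testing this against a vector `x`, with `λ` chosen from the Rayleigh quotient
`⟨x, S x⟩ / ⟨x, x⟩ ≤ c` and Cauchy–Schwarz `⟨x, S x⟩² ≤ ‖x‖² ‖S x‖²`, gives
`⟨x, T x⟩ ≥ -c²(c - 1)/4 ‖x‖²` as soon as `c ≥ 3`. Take `c = n` and divide by `n(n-1)(n-2)`.
-/

open Matrix Finset

section Ring
variable {R ι : Type*} [Ring R] [Fintype ι] [DecidableEq ι]

def sumDistinctTriples (a : ι → R) : R :=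
  ∑ t ∈ univ.filter (fun t : ι × ι × ι => t.1 ≠ t.2.1 ∧ t.1 ≠ t.2.2 ∧ t.2.1 ≠ t.2.2),
    a t.1 * a t.2.1 * a t.2.2

theorem sumDistinctTriples_eq_sum (a : ι → R) :
    sumDistinctTriples a =
      ∑ j, ((∑ i, a i - a j) * a j * (∑ i, a i - a j) - a j * (∑ i, a i - a j) * a j) := by
  have hind (i j k : ι) : (if i ≠ j ∧ i ≠ k ∧ j ≠ k then a i * a j * a k else 0) =
      (if i ≠ j then if k ≠ j then a i * a j * a k else 0 else 0)
        - (if k = i then if i ≠ j then a i * a j * a k else 0 else 0) := by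
    split_ifs <;> grind
  rw [sumDistinctTriples, sum_filter, Fintype.sum_prod_type]
  have hS (j : ι) : ∑ i, a i - a j = ∑ i, if i ≠ j then a i else 0 := by
    rw [sum_ite, sum_const_zero, add_zero, filter_ne', sum_erase_eq_sub (mem_univ j)]
  simp only [Fintype.sum_prod_type, hind, sum_sub_distrib, hS, sum_mul, mul_sum, ite_mul, mul_ite,
    zero_mul, mul_zero, sum_ite_eq', mem_univ, if_true]
  congr 1
  · rw [sum_comm]
    refine sum_congr rfl fun j _ => ?_
    rw [sum_comm]
    refine sum_congr rfl fun k _ => ?_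
    split_ifs <;> simp [*]
  · exact sum_congr rfl fun _ _ => sum_congr rfl fun _ _ => if_congr ne_comm rfl rfl
end Ring

theorem two_mul_sq_mul_sq_mul_sub_le {c X σ : ℝ} (hc : 3 ≤ c) (hX : 0 ≤ X)
    (hσ : (c - 1) * X ≤ σ) :
    2 * c ^ 2 * X ^ 2 * (σ - (c - 1) * X) ≤ σ * (2 * σ - c * X) ^ 2 := by
  -- in `u = σ - (c - 1) X ≥ 0` and `k = c - 3 ≥ 0` the difference is a sum of nonnegative terms
  obtain ⟨u, rfl⟩ : ∃ u, σ = (c - 1) * X + u := ⟨σ - (c - 1) * X, by ring⟩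
  obtain ⟨k, rfl⟩ : ∃ k, c = 3 + k := ⟨c - 3, by ring⟩
  have hu : 0 ≤ u := by linarith
  have hkX : 0 ≤ k * X := mul_nonneg (by linarith) hX
  nlinarith [mul_nonneg hX (sq_nonneg (X - 9 / 4 * u)), mul_nonneg hX (sq_nonneg u),
    mul_nonneg hkX hX, mul_nonneg hkX hu, mul_nonneg hkX hkX, pow_nonneg hu 3]

theorem neg_le_of_forall_quadratic_le {c X σ Q v : ℝ} (hc : 3 ≤ c)
    (hσX : σ ≤ c * X) (hCS : σ ^ 2 ≤ X * Q)
    (hv : ∀ l : ℝ, 2 * l * Q - (c ^ 2 / 4 + c * l + 2 * l ^ 2) * σ ≤ v) :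
    -(c ^ 2 * (c - 1) / 4 * X) ≤ v := by
  rcases le_or_gt σ ((c - 1) * X) with hle | hlt
  · nlinarith [hv 0]
  have hX : 0 < X := by nlinarith
  -- maximises `l ↦ 2 l σ² / X - (c²/4 + c l + 2 l²) σ`, a lower bound for the left side of `hv`
  set l := (2 * σ - c * X) / (4 * X)
  have hl : 0 ≤ l := div_nonneg (by nlinarith) (by positivity)
  have hlX : 4 * l * X = 2 * σ - c * X := by
    simp only [l]
    field_simp
  have hQ : 2 * l * σ ^ 2 ≤ X * (2 * l * Q) := by nlinarith [mul_le_mul_of_nonneg_left hCS hl]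
  have hvX := mul_le_mul_of_nonneg_left (hv l) hX.le
  have hlin : 2 * l * σ ^ 2 - (c ^ 2 / 4 + c * l + 2 * l ^ 2) * σ * X
      = 2 * l ^ 2 * σ * X - c ^ 2 * σ * X / 4 := by
    linear_combination (-(l * σ)) * hlX
  have hpoly : c ^ 2 * X * (σ - (c - 1) * X) / 4 ≤ 2 * l ^ 2 * σ * X := by
    have h := two_mul_sq_mul_sq_mul_sub_le hc hX.le hlt.le
    rw [← hlX] at h
    exact le_of_mul_le_mul_left (by linarith) (by positivity : (0 : ℝ) < 8 * X)
  refine le_of_mul_le_mul_left ?_ hX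
  linarith

namespace Matrix
variable {m ι : Type*} [Fintype m] [Fintype ι] [DecidableEq ι]

theorem PosSemidef.mul_mul_self_of_isHermitian {R : Type*} [Ring R] [PartialOrder R] [StarRing R]
    {A B : Matrix m m R} (hA : A.PosSemidef) (hB : B.IsHermitian) : (B * A * B).PosSemidef := by
  simpa only [hB.eq] using hA.conjTranspose_mul_mul_same B

variable [DecidableEq m]

theorem posSemidef_sumDistinctTriples_sub_add {A : ι → Matrix m m ℝ} {c : ℝ}
    (hA : ∀ i, (A i).PosSemidef) (hc : (c • 1 - ∑ i, A i).PosSemidef) (l : ℝ) :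
    (sumDistinctTriples A - (2 * l) • ((∑ i, A i) * ∑ i, A i)
      + (c ^ 2 / 4 + c * l + 2 * l ^ 2) • ∑ i, A i).PosSemidef := by
  set S := ∑ i, A i
  have hS : S.IsHermitian := (posSemidef_sum univ fun i _ => hA i).isHermitian
  have hscalar (r : ℝ) : (r • 1 : Matrix m m ℝ).IsHermitian :=
    isHermitian_one.smul (IsSelfAdjoint.all r)
  have hsandwich (a : Matrix m m ℝ) : (S - a - l • 1) * a * (S - a - l • 1)
      + (a - (c / 2 + l) • 1) * a * (a - (c / 2 + l) • 1) + a * (c • 1 - S) * a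
      = (S - a) * a * (S - a) - a * (S - a) * a - l • (a * S + S * a)
        + (c ^ 2 / 4 + c * l + 2 * l ^ 2) • a := by
    simp only [sub_mul, mul_sub, add_mul, mul_add, smul_mul_assoc, mul_smul_comm, one_mul, mul_one,
      mul_assoc, smul_sub, smul_add, smul_smul]
    module
  have hexpand : sumDistinctTriples A - (2 * l) • (S * S) + (c ^ 2 / 4 + c * l + 2 * l ^ 2) • S
      = ∑ i, ((S - A i - l • 1) * A i * (S - A i - l • 1)
        + (A i - (c / 2 + l) • 1) * A i * (A i - (c / 2 + l) • 1) + A i * (c • 1 - S) * A i) := by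
    simp only [hsandwich, sum_add_distrib, sum_sub_distrib, ← smul_sum, ← sum_mul,
      ← mul_sum, sumDistinctTriples_eq_sum]
    module
  rw [hexpand]
  refine posSemidef_sum univ fun i _ => ?_
  refine ((?_ : PosSemidef _).add ?_).add ?_
  · exact (hA i).mul_mul_self_of_isHermitian ((hS.sub (hA i).isHermitian).sub (hscalar l))
  · exact (hA i).mul_mul_self_of_isHermitian ((hA i).isHermitian.sub (hscalar _))
  · simpa only [(hA i).isHermitian.eq] using hc.conjTranspose_mul_mul_same (A i)

theorem posSemidef_sumDistinctTriples_add_smul_one {A : ι → Matrix m m ℝ} {c : ℝ} (hc3 : 3 ≤ c)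
    (hA : ∀ i, (A i).PosSemidef) (hc : (c • 1 - ∑ i, A i).PosSemidef) :
    (sumDistinctTriples A + (c ^ 2 * (c - 1) / 4) • 1).PosSemidef := by
  set S := ∑ i, A i
  have hS : S.IsHermitian := (posSemidef_sum univ fun i _ => hA i).isHermitian
  have hquad (l : ℝ) :
      (sumDistinctTriples A - (2 * l) • (S * S) + (c ^ 2 / 4 + c * l + 2 * l ^ 2) • S).PosSemidef :=
    posSemidef_sumDistinctTriples_sub_add hA hc l
  have hT : (sumDistinctTriples A).IsHermitian := by
    have h := (hquad 0).isHermitian.sub (hS.smul (IsSelfAdjoint.all (c ^ 2 / 4)))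
    simpa only [mul_zero, zero_smul, sub_zero, add_zero, ne_eq, OfNat.ofNat_ne_zero,
      not_false_eq_true, zero_pow, add_sub_cancel_right] using h
  refine .of_dotProduct_mulVec_nonneg (hT.add (isHermitian_one.smul (.all _))) fun x => ?_
  have hSS : x ⬝ᵥ (S * S) *ᵥ x = (S *ᵥ x) ⬝ᵥ (S *ᵥ x) := by
    rw [← mulVec_mulVec, dotProduct_mulVec, ← mulVec_transpose,
      (isHermitian_iff_isSymm.mp hS).eq]
  have hσc : x ⬝ᵥ S *ᵥ x ≤ c * (x ⬝ᵥ x) := by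
    have := hc.dotProduct_mulVec_nonneg x
    simp only [star_trivial, sub_mulVec, smul_mulVec, one_mulVec, dotProduct_sub, dotProduct_smul,
      smul_eq_mul] at this
    linarith
  have hCS : (x ⬝ᵥ S *ᵥ x) ^ 2 ≤ (x ⬝ᵥ x) * ((S *ᵥ x) ⬝ᵥ (S *ᵥ x)) := by
    simpa only [dotProduct, sq] using sum_mul_sq_le_sq_mul_sq univ x (S *ᵥ x)
  have hv (l : ℝ) : 2 * l * ((S *ᵥ x) ⬝ᵥ (S *ᵥ x))
      - (c ^ 2 / 4 + c * l + 2 * l ^ 2) * (x ⬝ᵥ S *ᵥ x) ≤ x ⬝ᵥ sumDistinctTriples A *ᵥ x := by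
    have := (hquad l).dotProduct_mulVec_nonneg x
    simp only [star_trivial, add_mulVec, sub_mulVec, smul_mulVec, dotProduct_add, dotProduct_sub,
      dotProduct_smul, smul_eq_mul, hSS] at this
    linarith
  have hbound := neg_le_of_forall_quadratic_le hc3 hσc hCS hv
  simp only [star_trivial, add_mulVec, smul_mulVec, one_mulVec, dotProduct_add, dotProduct_smul,
    smul_eq_mul]
  linarith

end Matrix

theorem stmt14 {d n : ℕ} (hn : 3 ≤ n) (A : Fin n → Matrix (Fin d) (Fin d) ℝ)
    (hA : ∀ i, (A i).PosSemidef)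
    (hsum : ((n : ℝ) • (1 : Matrix (Fin d) (Fin d) ℝ) - ∑ i, A i).PosSemidef) :
    (((1 : ℝ) / ((n : ℝ) * ((n : ℝ) - 1) * ((n : ℝ) - 2))) •
        (∑ t ∈ Finset.univ.filter
          (fun t : Fin n × Fin n × Fin n =>
            t.1 ≠ t.2.1 ∧ t.1 ≠ t.2.2 ∧ t.2.1 ≠ t.2.2),
          A t.1 * A t.2.1 * A t.2.2) -
      (-((n : ℝ) / (4 * ((n : ℝ) - 2)))) •
        (1 : Matrix (Fin d) (Fin d) ℝ)).PosSemidef := by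
  have hn' : (3 : ℝ) ≤ n := by exact_mod_cast hn
  have hT := posSemidef_sumDistinctTriples_add_smul_one hn' hA hsum
  have hN : 0 < (n : ℝ) * ((n : ℝ) - 1) * ((n : ℝ) - 2) :=
    mul_pos (mul_pos (by linarith) (by linarith)) (by linarith)
  convert hT.smul (one_div_pos.2 hN).le using 1
  rw [neg_smul, sub_neg_eq_add, smul_add, smul_smul]
  congr 2
  rw [div_mul_eq_mul_div, one_mul, div_eq_div_iff (by linarith) hN.ne']
  ring
end

section
/- Let A_1 = [[3/2, 0], [0, 0]] and A_2 = [[1/6, √2/3], [√2/3, 4/3]]. Then A_1 and A_2 are positive semidefinite, A_1 + A_2 ⪯ 2·I, and the smallest eigenvalue of A_1 A_2 + A_2 A_1 equals −1/2; in particular the bound −(1/4)·n(n−1)·I ⪯ Σ_{i≠j} A_i A_j is attained with equality for n = 2. -/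
/-!
A symmetric `2 × 2` matrix `!![a, b; b, c]` with `a, c ≥ 0` and `b² ≤ ac` is positive
semidefinite: completing the square, `a q` and `c q` are sums of squares for its quadratic form `q`,
and `a = c = 0` forces `b = 0`. Each of the four matrices in question satisfies these conditions
with `b² = ac`; for `A₁ A₂ + A₂ A₁ + I/2 = !![1, √2/2; √2/2, 1/2]` this vanishing determinant
rules out positive definiteness.
-/

open Matrix

theorem Matrix.posSemidef_fin_two_of {R : Type*} [CommRing R] [LinearOrder R]
    [IsStrictOrderedRing R] [StarRing R] [TrivialStar R] {a b c : R}
    (ha : 0 ≤ a) (hc : 0 ≤ c) (hb : b * b ≤ a * c) : (!![a, b; b, c]).PosSemidef := by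
  refine .of_dotProduct_mulVec_nonneg ?_ fun x => ?_
  · ext i j; fin_cases i <;> fin_cases j <;> simp
  simp only [star_trivial, dotProduct, mulVec, Fin.sum_univ_two, of_apply, cons_val',
    cons_val_zero, cons_val_one, empty_val', cons_val_fin_one]
  set q := x 0 * (a * x 0 + b * x 1) + x 1 * (b * x 0 + c * x 1)
  have hdet : 0 ≤ a * c - b * b := sub_nonneg.2 hb
  have haq : 0 ≤ a * q := by
    nlinarith [sq_nonneg (a * x 0 + b * x 1), mul_nonneg hdet (sq_nonneg (x 1))]
  have hcq : 0 ≤ c * q := by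
    nlinarith [sq_nonneg (b * x 0 + c * x 1), mul_nonneg hdet (sq_nonneg (x 0))]
  by_contra! hq
  have ha0 : a = 0 := by nlinarith
  have hc0 : c = 0 := by nlinarith
  have hb0 : b = 0 := by subst ha0; nlinarith
  simp [q, ha0, hb0, hc0] at hq

theorem stmt19 :
    let A₁ : Matrix (Fin 2) (Fin 2) ℝ := !![3/2, 0; 0, 0]
    let A₂ : Matrix (Fin 2) (Fin 2) ℝ := !![1/6, Real.sqrt 2 / 3; Real.sqrt 2 / 3, 4/3]
    A₁.PosSemidef ∧ A₂.PosSemidef ∧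
    ((2 : ℝ) • (1 : Matrix (Fin 2) (Fin 2) ℝ) - (A₁ + A₂)).PosSemidef ∧
    (A₁ * A₂ + A₂ * A₁ + (1/2 : ℝ) • (1 : Matrix (Fin 2) (Fin 2) ℝ)).PosSemidef ∧
    ¬ (A₁ * A₂ + A₂ * A₁ + (1/2 : ℝ) • (1 : Matrix (Fin 2) (Fin 2) ℝ)).PosDef := by
  intro A₁ A₂
  have h2 : √2 * √2 = 2 := Real.mul_self_sqrt zero_le_two
  have hgap : (2 : ℝ) • (1 : Matrix (Fin 2) (Fin 2) ℝ) - (A₁ + A₂) =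
      !![1/3, -(√2 / 3); -(√2 / 3), 2/3] := by
    ext i j; fin_cases i <;> fin_cases j <;> simp [A₁, A₂, one_apply] <;> norm_num
  have hanti : A₁ * A₂ + A₂ * A₁ + (1/2 : ℝ) • 1 = !![1, √2 / 2; √2 / 2, 1/2] := by
    ext i j; fin_cases i <;> fin_cases j <;> simp [A₁, A₂] <;> ring
  refine ⟨posSemidef_fin_two_of (by norm_num) le_rfl (by norm_num),
    posSemidef_fin_two_of (by norm_num) (by norm_num) ?_, ?_, ?_, ?_⟩
  · rw [div_mul_div_comm, h2]; norm_num
  · rw [hgap]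
    refine posSemidef_fin_two_of (by norm_num) (by norm_num) ?_
    rw [neg_mul_neg, div_mul_div_comm, h2]; norm_num
  · rw [hanti]
    refine posSemidef_fin_two_of (by norm_num) (by norm_num) ?_
    rw [div_mul_div_comm, h2]; norm_num
  · rw [hanti]
    refine fun hpd => hpd.det_pos.ne' ?_
    rw [det_fin_two_of, div_mul_div_comm, h2]; norm_num
end
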